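/- arXiv:1802.08951 — 6 statements merged into one kernel-verified Lean document; each statement's English description precedes it below -/
import Mathlib

section
/- If α ≤ 1, then the density of the continuous gamma-Lomax distribution with parameters c, α, θ has a decreasing hazard rate: the hazard function h(x) = f(x)/(1−F(x)) is nonincreasing on (0,∞). -/
open MeasureTheory Real Filter Set

/-- Lower incomplete gamma function γ(a,t) = ∫₀ᵗ u^(a-1) e^(-u) du. -/
noncomputable def lowerGamma (a t : ℝ) : ℝ :=
  ∫ u in (0:ℝ)..t, u ^ (a - 1) * Real.exp (-u)

/-- pmf of the discrete gamma-Lomax distribution DGLD(c,a,θ). -/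
noncomputable def dgldPMF (c a θ : ℝ) (x : ℕ) : ℝ :=
  (1 / Real.Gamma a) *
    (lowerGamma a (c⁻¹ * Real.log (1 + ((x : ℝ) + 1) / θ)) -
     lowerGamma a (c⁻¹ * Real.log (1 + (x : ℝ) / θ)))

/-- cdf of DGLD(c,a,θ) at x ∈ ℕ. -/
noncomputable def dgldCDF (c a θ : ℝ) (x : ℕ) : ℝ :=
  lowerGamma a (c⁻¹ * Real.log (1 + ((x : ℝ) + 1) / θ)) / Real.Gamma a

/-- density of the continuous gamma-Lomax distribution. -/
noncomputable def glPDF (c a θ : ℝ) (x : ℝ) : ℝ :=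
  (1 / ((x + θ) * Real.Gamma a * c ^ a)) * (1 + x / θ) ^ (-(1 / c)) *
    (Real.log (1 + x / θ)) ^ (a - 1)

/-- cdf of the continuous gamma-Lomax distribution. -/
noncomputable def glCDF (c a θ : ℝ) (x : ℝ) : ℝ :=
  lowerGamma a (c⁻¹ * Real.log (1 + x / θ)) / Real.Gamma a

/-!
If `T` has the Gamma(a, 1) law, then `θ (exp (c T) - 1)` is gamma-Lomax; hence, with
`t = c⁻¹ log (1 + x / θ)`, the gamma-Lomax hazard at `x` is the gamma hazard
`t ^ (a - 1) e ^ (-t) / ∫_t^∞ u ^ (a - 1) e ^ (-u) du` divided by `c (x + θ)`, and both factors are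
nonincreasing in `x`. Shifting the tail integral to `(0, ∞)`, the reciprocal of the gamma hazard is
`∫_0^∞ (1 + w / t) ^ (a - 1) e ^ (-w) dw`, which is nondecreasing in `t` because `a ≤ 1`.
-/

noncomputable def upperGamma (a t : ℝ) : ℝ :=
  ∫ u in Ioi t, u ^ (a - 1) * exp (-u)

lemma setIntegral_Ioi_eq_setIntegral_Ioi_zero_comp_add (g : ℝ → ℝ) (t : ℝ) :
    ∫ u in Ioi t, g u = ∫ w in Ioi 0, g (t + w) := by
  rw [← integral_indicator measurableSet_Ioi, ← integral_indicator measurableSet_Ioi,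
    ← integral_add_left_eq_self _ t]
  congr 1
  ext w
  simp [indicator_apply]

lemma MeasureTheory.IntegrableOn.comp_add_Ioi_zero {g : ℝ → ℝ} {t : ℝ}
    (hg : IntegrableOn g (Ioi t)) :
    IntegrableOn (fun w => g (t + w)) (Ioi 0) := by
  rw [← integrable_indicator_iff measurableSet_Ioi] at hg ⊢
  have hshift :
      (Ioi 0).indicator (fun w => g (t + w)) = fun w => (Ioi t).indicator g (t + w) := by
    ext w
    simp [indicator_apply]
  rw [hshift]
  exact hg.comp_add_left t

/-- Cross-multiplied form of: if `g (t + w) / g t` is nondecreasing in `t`, then the hazard rate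
`g t / ∫_t^∞ g` is nonincreasing. -/
lemma mul_setIntegral_Ioi_le_mul_setIntegral_Ioi {g : ℝ → ℝ} {t t' : ℝ}
    (hgt : IntegrableOn g (Ioi t)) (hgt' : IntegrableOn g (Ioi t'))
    (hg : ∀ w > 0, g t' * g (t + w) ≤ g t * g (t' + w)) :
    g t' * ∫ u in Ioi t, g u ≤ g t * ∫ u in Ioi t', g u := by
  rw [setIntegral_Ioi_eq_setIntegral_Ioi_zero_comp_add g t,
    setIntegral_Ioi_eq_setIntegral_Ioi_zero_comp_add g t', ← integral_const_mul,
    ← integral_const_mul]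
  exact setIntegral_mono_on (hgt.comp_add_Ioi_zero.const_mul _)
    (hgt'.comp_add_Ioi_zero.const_mul _) measurableSet_Ioi hg

lemma integrableOn_rpow_mul_exp_neg_Ioi {a : ℝ} (ha : 0 < a) {t : ℝ} (ht : 0 ≤ t) :
    IntegrableOn (fun u : ℝ => u ^ (a - 1) * exp (-u)) (Ioi t) := by
  exact ((GammaIntegral_convergent ha).mono_set (Ioi_subset_Ioi ht)).congr_fun
    (fun u _ => mul_comm _ _) measurableSet_Ioi

lemma lowerGamma_add_upperGamma {a : ℝ} (ha : 0 < a) {t : ℝ} (ht : 0 ≤ t) :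
    lowerGamma a t + upperGamma a t = Gamma a := by
  have hint := integrableOn_rpow_mul_exp_neg_Ioi ha le_rfl
  rw [lowerGamma, upperGamma, intervalIntegral.integral_of_le ht,
    ← setIntegral_union (Ioc_disjoint_Ioi le_rfl) measurableSet_Ioi
      (hint.mono_set Ioc_subset_Ioi_self) (hint.mono_set (Ioi_subset_Ioi ht)),
    Ioc_union_Ioi_eq_Ioi ht, Gamma_eq_integral ha]
  exact setIntegral_congr_fun measurableSet_Ioi fun u _ => mul_comm _ _

lemma upperGamma_pos {a : ℝ} (ha : 0 < a) {t : ℝ} (ht : 0 ≤ t) : 0 < upperGamma a t := by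
  have hpos : ∀ u ∈ Ioi t, 0 < u ^ (a - 1) * exp (-u) := fun u hu =>
    mul_pos (rpow_pos_of_pos (ht.trans_lt hu) _) (exp_pos _)
  rw [upperGamma, setIntegral_pos_iff_support_of_nonneg_ae
    ((ae_restrict_iff' measurableSet_Ioi).2 (ae_of_all _ fun u hu => (hpos u hu).le))
    (integrableOn_rpow_mul_exp_neg_Ioi ha ht)]
  calc (0 : ENNReal) < volume (Ioi t) := by simp [volume_Ioi]
    _ ≤ _ := measure_mono fun u hu => by exact ⟨(hpos u hu).ne', hu⟩

lemma rpow_mul_exp_neg_mul_le {a : ℝ} (ha1 : a ≤ 1) {t t' w : ℝ} (ht : 0 < t) (htt' : t ≤ t')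
    (hw : 0 < w) :
    t' ^ (a - 1) * exp (-t') * ((t + w) ^ (a - 1) * exp (-(t + w)))
      ≤ t ^ (a - 1) * exp (-t) * ((t' + w) ^ (a - 1) * exp (-(t' + w))) := by
  have ht' : 0 < t' := ht.trans_le htt'
  have hpow : t' ^ (a - 1) * (t + w) ^ (a - 1) ≤ t ^ (a - 1) * (t' + w) ^ (a - 1) := by
    rw [← mul_rpow ht'.le (by positivity), ← mul_rpow ht.le (by positivity)]
    exact rpow_le_rpow_of_nonpos (by positivity) (by nlinarith) (by linarith)
  have hexp : exp (-t') * exp (-(t + w)) = exp (-t) * exp (-(t' + w)) := by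
    rw [← exp_add, ← exp_add]
    ring_nf
  calc t' ^ (a - 1) * exp (-t') * ((t + w) ^ (a - 1) * exp (-(t + w)))
      = t' ^ (a - 1) * (t + w) ^ (a - 1) * (exp (-t') * exp (-(t + w))) := by ring
    _ ≤ t ^ (a - 1) * (t' + w) ^ (a - 1) * (exp (-t') * exp (-(t + w))) := by gcongr
    _ = t ^ (a - 1) * exp (-t) * ((t' + w) ^ (a - 1) * exp (-(t' + w))) := by rw [hexp]; ring

lemma antitoneOn_gamma_hazard {a : ℝ} (ha : 0 < a) (ha1 : a ≤ 1) :
    AntitoneOn (fun t => t ^ (a - 1) * exp (-t) / upperGamma a t) (Ioi 0) := by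
  intro t (ht : 0 < t) t' (ht' : 0 < t') htt'
  rw [div_le_div_iff₀ (upperGamma_pos ha ht'.le) (upperGamma_pos ha ht.le)]
  exact mul_setIntegral_Ioi_le_mul_setIntegral_Ioi (g := fun u => u ^ (a - 1) * exp (-u))
    (integrableOn_rpow_mul_exp_neg_Ioi ha ht.le) (integrableOn_rpow_mul_exp_neg_Ioi ha ht'.le)
    fun w hw => rpow_mul_exp_neg_mul_le ha1 ht htt' hw

lemma inv_mul_log_one_add_div_nonneg {c θ x : ℝ} (hc : 0 ≤ c) (hθ : 0 ≤ θ) (hx : 0 ≤ x) :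
    0 ≤ c⁻¹ * log (1 + x / θ) :=
  mul_nonneg (inv_nonneg.2 hc) (log_nonneg (le_add_of_nonneg_right (div_nonneg hx hθ)))

lemma glPDF_eq {c a θ x : ℝ} (hc : 0 < c) (hθ : 0 < θ) (hx : 0 ≤ x) :
    glPDF c a θ x = (c⁻¹ * log (1 + x / θ)) ^ (a - 1) * exp (-(c⁻¹ * log (1 + x / θ)))
      / (c * (x + θ) * Gamma a) := by
  have hlog : 0 ≤ log (1 + x / θ) := log_nonneg (le_add_of_nonneg_right (div_nonneg hx hθ.le))
  have hexp : (1 + x / θ) ^ (-(1 / c)) = exp (-(c⁻¹ * log (1 + x / θ))) := by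
    rw [rpow_def_of_pos (by positivity)]
    ring_nf
  have hpow : (c⁻¹ * log (1 + x / θ)) ^ (a - 1) = c⁻¹ ^ (a - 1) * log (1 + x / θ) ^ (a - 1) :=
    mul_rpow (by positivity) hlog
  rw [glPDF, hexp, hpow, inv_rpow hc.le, rpow_sub hc, rpow_one]
  field_simp

lemma one_sub_glCDF_eq {c a θ x : ℝ} (hc : 0 < c) (ha : 0 < a) (hθ : 0 < θ) (hx : 0 ≤ x) :
    1 - glCDF c a θ x = upperGamma a (c⁻¹ * log (1 + x / θ)) / Gamma a := by
  have hsplit := lowerGamma_add_upperGamma ha (inv_mul_log_one_add_div_nonneg hc.le hθ.le hx)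
  rw [glCDF, eq_div_iff (Gamma_pos_of_pos ha).ne', sub_mul, one_mul,
    div_mul_cancel₀ _ (Gamma_pos_of_pos ha).ne']
  linarith

lemma glPDF_div_one_sub_glCDF {c a θ x : ℝ} (hc : 0 < c) (ha : 0 < a) (hθ : 0 < θ) (hx : 0 ≤ x) :
    glPDF c a θ x / (1 - glCDF c a θ x) =
      (c⁻¹ * log (1 + x / θ)) ^ (a - 1) * exp (-(c⁻¹ * log (1 + x / θ)))
        / upperGamma a (c⁻¹ * log (1 + x / θ)) / (c * (x + θ)) := by
  rw [glPDF_eq hc hθ hx, one_sub_glCDF_eq hc ha hθ hx]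
  field_simp [(Gamma_pos_of_pos ha).ne']

theorem gammaLomax_DFR (c a θ : ℝ) (hc : 0 < c) (ha : 0 < a) (hθ : 0 < θ)
    (ha1 : a ≤ 1) :
    ∀ x y : ℝ, 0 < x → x ≤ y →
      glPDF c a θ y / (1 - glCDF c a θ y) ≤ glPDF c a θ x / (1 - glCDF c a θ x) := by
  intro x y hx hxy
  have hy : 0 < y := hx.trans_le hxy
  have ht : 0 < c⁻¹ * log (1 + x / θ) :=
    mul_pos (inv_pos.2 hc) (log_pos (lt_add_of_pos_right 1 (div_pos hx hθ)))
  have htt' : c⁻¹ * log (1 + x / θ) ≤ c⁻¹ * log (1 + y / θ) := by gcongr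
  rw [glPDF_div_one_sub_glCDF hc ha hθ hx.le, glPDF_div_one_sub_glCDF hc ha hθ hy.le]
  exact div_le_div₀ (div_nonneg (by positivity) (upperGamma_pos ha ht.le).le)
    (antitoneOn_gamma_hazard ha ha1 ht (ht.trans_le htt') htt') (mul_pos hc (by linarith))
    (by gcongr)
end

section
/- If α ≤ 1, then the discrete gamma-Lomax distribution DGLD(c,α,θ) has a decreasing failure rate: the hazard function h(x) = g(x)/S(x) is nonincreasing in x ∈ ℕ, where g is the pmf and S(x) = P(X ≥ x) the survival function. -/
open MeasureTheory Real Filter Set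
open ENNReal

noncomputable def gtail (a t : ℝ) : ℝ :=
  ∫ u in Set.Ioi t, u ^ (a - 1) * Real.exp (-u)

lemma gtail_integrableOn {a : ℝ} (ha : 0 < a) {t : ℝ} (ht : 0 ≤ t) :
    IntegrableOn (fun u : ℝ => u ^ (a - 1) * Real.exp (-u)) (Set.Ioi t) := by
  have h := Real.GammaIntegral_convergent ha
  have h2 : IntegrableOn (fun u : ℝ => u ^ (a - 1) * Real.exp (-u)) (Set.Ioi 0) := by
    refine h.congr_fun (fun x _ => mul_comm _ _) measurableSet_Ioi
  exact h2.mono_set (Ioi_subset_Ioi ht)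

lemma lowerGamma_add_gtail {a : ℝ} (ha : 0 < a) {t : ℝ} (ht : 0 ≤ t) :
    lowerGamma a t + gtail a t = Real.Gamma a := by
  have hG : Real.Gamma a = ∫ u in Set.Ioi (0:ℝ), u ^ (a - 1) * Real.exp (-u) := by
    rw [Real.Gamma_eq_integral ha]
    exact setIntegral_congr_fun measurableSet_Ioi (fun x _ => mul_comm _ _)
  have hL : lowerGamma a t = ∫ u in Set.Ioc (0:ℝ) t, u ^ (a - 1) * Real.exp (-u) := by
    rw [lowerGamma, intervalIntegral.integral_of_le ht]
  have hsplit : Set.Ioc (0:ℝ) t ∪ Set.Ioi t = Set.Ioi 0 := Ioc_union_Ioi_eq_Ioi ht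
  rw [hG, hL, gtail, ← hsplit, setIntegral_union (Set.Ioc_disjoint_Ioi le_rfl) measurableSet_Ioi
    ((gtail_integrableOn ha le_rfl).mono_set Ioc_subset_Ioi_self) (gtail_integrableOn ha ht)]

lemma gtail_pos {a : ℝ} (ha : 0 < a) {t : ℝ} (ht : 0 ≤ t) : 0 < gtail a t := by
  rw [gtail]
  rw [setIntegral_pos_iff_support_of_nonneg_ae]
  · have hsub : Set.Ioi t ⊆ Function.support (fun u : ℝ => u ^ (a - 1) * Real.exp (-u)) ∩ Set.Ioi t := by
      intro u hu
      have hu0 : 0 < u := lt_of_le_of_lt ht hu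
      refine ⟨?_, hu⟩
      simp only [Function.mem_support]
      positivity
    calc (0:ℝ≥0∞) < volume (Set.Ioi t) := by simp
      _ ≤ _ := measure_mono hsub
  · filter_upwards [ae_restrict_mem measurableSet_Ioi] with u hu
    have hu0 : 0 < u := lt_of_le_of_lt ht hu
    positivity
  · exact gtail_integrableOn ha ht

lemma gtail_anti {a : ℝ} (ha : 0 < a) {s t : ℝ} (hs : 0 ≤ s) (hst : s ≤ t) :
    gtail a t ≤ gtail a s := by
  refine setIntegral_mono_set (gtail_integrableOn ha hs) ?_ (HasSubset.Subset.eventuallyLE (Ioi_subset_Ioi hst))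
  filter_upwards [ae_restrict_mem measurableSet_Ioi] with u hu
  have hu0 : 0 < u := lt_of_le_of_lt hs hu
  positivity

lemma shift_integral (f : ℝ → ℝ) (m d : ℝ) :
    ∫ u in Set.Ioi m, f (u + d) = ∫ u in Set.Ioi (m + d), f u := by
  have h := (measurePreserving_add_right (volume : Measure ℝ) d).setIntegral_preimage_emb
    (measurableEmbedding_addRight d) f (Set.Ioi (m + d))
  simpa using h

lemma pointwise_logconvex {a : ℝ} (ha1 : a ≤ 1) {u v : ℝ} (hu : 0 < u) (hv : 0 < v) :
    ((u + v) / 2) ^ (a - 1) * Real.exp (-((u + v) / 2)) ≤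
      Real.sqrt (u ^ (a - 1) * Real.exp (-u)) * Real.sqrt (v ^ (a - 1) * Real.exp (-v)) := by
  have hm : 0 < (u + v) / 2 := by linarith
  set m := (u + v) / 2 with hmdef
  rw [← Real.sqrt_mul (by positivity)]
  have hprod : (u ^ (a-1) * Real.exp (-u)) * (v ^ (a-1) * Real.exp (-v))
      = (u * v) ^ (a-1) * Real.exp (-(u+v)) := by
    rw [Real.mul_rpow hu.le hv.le,
      show Real.exp (-(u+v)) = Real.exp (-u) * Real.exp (-v) by rw [← Real.exp_add]; ring_nf]
    ring
  rw [hprod]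
  refine (Real.le_sqrt (by positivity) (by positivity)).mpr ?_
  have h1 : (m ^ (a-1))^(2:ℕ) = ((m^(2:ℕ) : ℝ)) ^ (a-1) := by
    rw [← Real.rpow_natCast (m ^ (a-1)) 2, ← Real.rpow_mul hm.le,
        ← Real.rpow_natCast m 2, ← Real.rpow_mul hm.le]
    ring_nf
  have h2 : Real.exp (-m) ^ (2:ℕ) = Real.exp (-(u+v)) := by
    rw [← Real.exp_nat_mul]
    congr 1
    push_cast [hmdef]; ring
  rw [mul_pow, h1, h2]
  gcongr ?_ * _
  have hamgm : u * v ≤ m^(2:ℕ) := by nlinarith [sq_nonneg (u - v)]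
  calc ((m^(2:ℕ):ℝ)) ^ (a-1)
      ≤ (u*v) ^ (a-1) := Real.rpow_le_rpow_of_nonpos (by positivity) hamgm (by linarith)


lemma gtail_nonneg {a : ℝ} (ha : 0 < a) {t : ℝ} (ht : 0 ≤ t) : 0 ≤ gtail a t :=
  (gtail_pos ha ht).le

set_option maxHeartbeats 1000000 in
lemma gtail_midpoint {a : ℝ} (ha : 0 < a) (ha1 : a ≤ 1) {s t : ℝ} (hs : 0 ≤ s) (hst : s ≤ t) :
    gtail a ((s + t) / 2) ^ 2 ≤ gtail a s * gtail a t := by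
  set f : ℝ → ℝ := fun u => u ^ (a - 1) * Real.exp (-u) with hf
  set d : ℝ := (t - s) / 2 with hd
  set m : ℝ := (s + t) / 2 with hm
  have hd0 : 0 ≤ d := by simp [hd]; linarith
  have hm0 : 0 ≤ m := by simp [hm]; linarith
  have hms : m + -d = s := by simp [hm, hd]; ring
  have hmt : m + d = t := by simp [hm, hd]; ring
  have hfm : Measurable f := by
    apply Measurable.mul
    · exact measurable_id.pow_const _
    · exact Real.measurable_exp.comp measurable_neg
  -- shifted integrability
  have hshift : ∀ e : ℝ, 0 ≤ m + e → IntegrableOn (fun u => f (u + e)) (Set.Ioi m) := by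
    intro e he
    have hpre : (fun x : ℝ => x + e) ⁻¹' (Set.Ioi (m + e)) = Set.Ioi m := by
      ext x; simp
    have h1 := (measurePreserving_add_right (volume : Measure ℝ) e).restrict_preimage_emb
      (measurableEmbedding_addRight e) (Set.Ioi (m + e))
    rw [hpre] at h1
    have h2 : Integrable (f ∘ (fun x : ℝ => x + e)) (volume.restrict (Set.Ioi m)) :=
      (h1.integrable_comp_emb (g := f) (measurableEmbedding_addRight e)).mpr
        (gtail_integrableOn ha he)
    exact h2
  -- shifted integral identity
  have hshiftI : ∀ e : ℝ, (∫ u in Set.Ioi m, f (u + e)) = gtail a (m + e) := by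
    intro e
    have h := (measurePreserving_add_right (volume : Measure ℝ) e).setIntegral_preimage_emb
      (measurableEmbedding_addRight e) f (Set.Ioi (m + e))
    have hpre : (fun x : ℝ => x + e) ⁻¹' (Set.Ioi (m + e)) = Set.Ioi m := by ext x; simp
    rw [hpre] at h
    exact h
  set g₁ : ℝ → ℝ := fun u => Real.sqrt (f (u + -d)) with hg1
  set g₂ : ℝ → ℝ := fun u => Real.sqrt (f (u + d)) with hg2
  have hg1m : AEStronglyMeasurable g₁ (volume.restrict (Set.Ioi m)) :=
    ((Real.continuous_sqrt.measurable).comp (hfm.comp (measurable_id.add_const (-d)))).aestronglyMeasurable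
  have hg2m : AEStronglyMeasurable g₂ (volume.restrict (Set.Ioi m)) :=
    ((Real.continuous_sqrt.measurable).comp (hfm.comp (measurable_id.add_const d))).aestronglyMeasurable
  have hnn : ∀ᵐ u ∂(volume.restrict (Set.Ioi m)), 0 < u := by
    filter_upwards [ae_restrict_mem measurableSet_Ioi] with u hu
    exact lt_of_le_of_lt hm0 hu
  have hsq1 : ∀ᵐ u ∂(volume.restrict (Set.Ioi m)), g₁ u ^ 2 = f (u + -d) := by
    filter_upwards [ae_restrict_mem measurableSet_Ioi] with u hu
    have hu' : m < u := hu
    have : (0:ℝ) < u + -d := by simp only [hm, hd] at hu' ⊢; linarith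
    exact Real.sq_sqrt (by positivity)
  have hsq2 : ∀ᵐ u ∂(volume.restrict (Set.Ioi m)), g₂ u ^ 2 = f (u + d) := by
    filter_upwards [ae_restrict_mem measurableSet_Ioi] with u hu
    have : (0:ℝ) < u + d := by
      have : m < u := hu
      linarith
    exact Real.sq_sqrt (by positivity)
  have hL1 : MemLp g₁ 2 (volume.restrict (Set.Ioi m)) := by
    rw [memLp_two_iff_integrable_sq hg1m]
    exact (hshift (-d) (by rw [hms]; exact hs)).congr (hsq1.mono fun u hu => hu.symm)
  have hL2 : MemLp g₂ 2 (volume.restrict (Set.Ioi m)) := by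
    rw [memLp_two_iff_integrable_sq hg2m]
    exact (hshift d (by rw [hmt]; linarith)).congr (hsq2.mono fun u hu => hu.symm)
  -- step 1: gtail m ≤ ∫ g₁ g₂
  have hmul_int : Integrable (fun u => g₁ u * g₂ u) (volume.restrict (Set.Ioi m)) := by
    have := hL2.smul (φ := g₁) hL1 (r := 1) (hpqr := ⟨by
      rw [inv_one, ENNReal.inv_two_add_inv_two]⟩)
    rw [memLp_one_iff_integrable] at this
    exact this.congr (Eventually.of_forall fun u => by simp [smul_eq_mul])
  have hstep1 : gtail a m ≤ ∫ u in Set.Ioi m, g₁ u * g₂ u := by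
    rw [gtail]
    refine integral_mono_ae (gtail_integrableOn ha hm0) hmul_int ?_
    filter_upwards [ae_restrict_mem measurableSet_Ioi] with u hu
    have hu' : m < u := hu
    have hu1 : 0 < u + -d := by simp only [hm, hd] at hu' ⊢; linarith
    have hu2 : 0 < u + d := by have : m < u := hu; linarith
    have hmid : ((u + -d) + (u + d)) / 2 = u := by ring
    have := pointwise_logconvex ha1 hu1 hu2
    rw [hmid] at this
    exact this
  -- step 2: Hölder
  have hconj : Real.HolderConjugate 2 2 := Real.holderConjugate_iff.mpr ⟨one_lt_two, by norm_num⟩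
  have hL1' : MemLp g₁ (ENNReal.ofReal 2) (volume.restrict (Set.Ioi m)) := by
    convert hL1 using 2; simp [ENNReal.ofReal_ofNat]
  have hL2' : MemLp g₂ (ENNReal.ofReal 2) (volume.restrict (Set.Ioi m)) := by
    convert hL2 using 2; simp [ENNReal.ofReal_ofNat]
  have hstep2 := integral_mul_le_Lp_mul_Lq_of_nonneg hconj
    (Eventually.of_forall fun u => Real.sqrt_nonneg _)
    (Eventually.of_forall fun u => Real.sqrt_nonneg _) hL1' hL2'
  -- identify the Lp norms
  have hint1 : (∫ u in Set.Ioi m, g₁ u ^ (2:ℝ)) = gtail a s := by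
    rw [← hms, ← hshiftI (-d)]
    refine integral_congr_ae ?_
    filter_upwards [hsq1] with u hu
    rw [← hu]
    rw [← Real.rpow_natCast (g₁ u) 2]
    norm_num
  have hint2 : (∫ u in Set.Ioi m, g₂ u ^ (2:ℝ)) = gtail a t := by
    rw [← hmt, ← hshiftI d]
    refine integral_congr_ae ?_
    filter_upwards [hsq2] with u hu
    rw [← hu, ← Real.rpow_natCast (g₂ u) 2]
    norm_num
  rw [hint1, hint2] at hstep2
  have hfinal : gtail a m ≤ (gtail a s) ^ ((1:ℝ)/2) * (gtail a t) ^ ((1:ℝ)/2) :=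
    le_trans hstep1 hstep2
  calc gtail a m ^ 2 ≤ ((gtail a s) ^ ((1:ℝ)/2) * (gtail a t) ^ ((1:ℝ)/2)) ^ 2 := by
        have h0 : 0 ≤ gtail a m := gtail_nonneg ha hm0
        exact pow_le_pow_left₀ h0 hfinal 2
    _ = gtail a s * gtail a t := by
        rw [mul_pow, ← Real.rpow_natCast ((gtail a s) ^ ((1:ℝ)/2)) 2,
          ← Real.rpow_natCast ((gtail a t) ^ ((1:ℝ)/2)) 2,
          ← Real.rpow_mul (gtail_nonneg ha hs), ← Real.rpow_mul (gtail_nonneg ha (hs.trans hst))]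
        norm_num

noncomputable def Tf (c θ x : ℝ) : ℝ := c⁻¹ * Real.log (1 + x / θ)

section T
variable {c θ : ℝ}

lemma Tf_nonneg (hc : 0 < c) (hθ : 0 < θ) {x : ℝ} (hx : 0 ≤ x) : 0 ≤ Tf c θ x := by
  have : 0 ≤ Real.log (1 + x / θ) := Real.log_nonneg (by
    have : 0 ≤ x / θ := div_nonneg hx hθ.le
    linarith)
  have hci : 0 ≤ c⁻¹ := inv_nonneg.mpr hc.le
  exact mul_nonneg hci this

lemma Tf_mono (hc : 0 < c) (hθ : 0 < θ) {x y : ℝ} (hx : 0 ≤ x) (hxy : x ≤ y) : Tf c θ x ≤ Tf c θ y := by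
  have hx0 : (0:ℝ) < 1 + x / θ := by
    have : 0 ≤ x / θ := div_nonneg hx hθ.le
    linarith
  have hlog : Real.log (1 + x / θ) ≤ Real.log (1 + y / θ) := by
    apply Real.log_le_log hx0
    have : x / θ ≤ y / θ := by gcongr
    linarith
  exact mul_le_mul_of_nonneg_left hlog (inv_nonneg.mpr hc.le)

lemma Tf_concave3 (hc : 0 < c) (hθ : 0 < θ) {x : ℝ} (hx : 0 ≤ x) :
    Tf c θ x + Tf c θ (x + 2) ≤ 2 * Tf c θ (x + 1) := by
  have hA : (0:ℝ) < 1 + x / θ := by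
    have : 0 ≤ x / θ := div_nonneg hx hθ.le; linarith
  have hB : (0:ℝ) < 1 + (x + 2) / θ := by
    have : 0 ≤ (x + 2) / θ := div_nonneg (by linarith) hθ.le; linarith
  have hC : (0:ℝ) < 1 + (x + 1) / θ := by
    have : 0 ≤ (x + 1) / θ := div_nonneg (by linarith) hθ.le; linarith
  have hkey : Real.log (1 + x / θ) + Real.log (1 + (x + 2) / θ)
      ≤ 2 * Real.log (1 + (x + 1) / θ) := by
    rw [← Real.log_mul hA.ne' hB.ne', show (2:ℝ) * Real.log (1 + (x+1)/θ)
        = Real.log ((1 + (x+1)/θ) ^ 2) by rw [Real.log_pow]; push_cast; ring]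
    apply Real.log_le_log (by positivity)
    have h1 : (1 + x/θ) * (1 + (x+2)/θ) ≤ (1 + (x+1)/θ)^2 := by
      field_simp
      nlinarith [sq_nonneg θ, hθ]
    exact h1
  calc Tf c θ x + Tf c θ (x + 2)
      = c⁻¹ * (Real.log (1 + x / θ) + Real.log (1 + (x + 2) / θ)) := by rw [Tf, Tf]; ring
    _ ≤ c⁻¹ * (2 * Real.log (1 + (x + 1) / θ)) := by
        exact mul_le_mul_of_nonneg_left hkey (inv_nonneg.mpr hc.le)
    _ = 2 * Tf c θ (x + 1) := by rw [Tf]; ring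

end T

theorem dgld_DFR (c a θ : ℝ) (hc : 0 < c) (ha : 0 < a) (hθ : 0 < θ)
    (ha1 : a ≤ 1) :
    ∀ x y : ℕ, x ≤ y →
      (lowerGamma a (c⁻¹ * Real.log (1 + ((y : ℝ) + 1) / θ)) -
          lowerGamma a (c⁻¹ * Real.log (1 + (y : ℝ) / θ))) /
        (Real.Gamma a - lowerGamma a (c⁻¹ * Real.log (1 + (y : ℝ) / θ))) ≤
      (lowerGamma a (c⁻¹ * Real.log (1 + ((x : ℝ) + 1) / θ)) -
          lowerGamma a (c⁻¹ * Real.log (1 + (x : ℝ) / θ))) /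
        (Real.Gamma a - lowerGamma a (c⁻¹ * Real.log (1 + (x : ℝ) / θ))) := by
  -- survival function at real points
  set S : ℝ → ℝ := fun x => gtail a (Tf c θ x) with hS
  have hT0 : ∀ x : ℝ, 0 ≤ x → 0 ≤ Tf c θ x := fun x hx => Tf_nonneg hc hθ hx
  have hSpos : ∀ x : ℝ, 0 ≤ x → 0 < S x := fun x hx => gtail_pos ha (hT0 x hx)
  -- rewrite hazard in terms of S
  have hrw : ∀ x : ℝ, 0 ≤ x →
      (lowerGamma a (Tf c θ (x + 1)) - lowerGamma a (Tf c θ x)) /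
        (Real.Gamma a - lowerGamma a (Tf c θ x)) = (S x - S (x + 1)) / S x := by
    intro x hx
    have h1 := lowerGamma_add_gtail ha (hT0 x hx)
    have h2 := lowerGamma_add_gtail ha (hT0 (x + 1) (by linarith))
    have e1 : lowerGamma a (Tf c θ x) = Real.Gamma a - S x := by
      simp only [hS]; linarith
    have e2 : lowerGamma a (Tf c θ (x + 1)) = Real.Gamma a - S (x + 1) := by
      simp only [hS]; linarith
    rw [e1, e2]; ring_nf
  -- key log-convexity step
  have hkey : ∀ x : ℝ, 0 ≤ x → S (x + 1) ^ 2 ≤ S x * S (x + 2) := by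
    intro x hx
    set mid := (Tf c θ x + Tf c θ (x + 2)) / 2 with hmid
    have hmid0 : 0 ≤ mid := by
      have := hT0 x hx; have := hT0 (x + 2) (by linarith)
      rw [hmid]; linarith
    have hmidle : mid ≤ Tf c θ (x + 1) := by
      have := Tf_concave3 hc hθ hx; rw [hmid]; linarith
    have h1 : S (x + 1) ≤ gtail a mid := gtail_anti ha hmid0 hmidle
    have h2 : gtail a mid ^ 2 ≤ S x * S (x + 2) :=
      gtail_midpoint ha ha1 (hT0 x hx) (Tf_mono hc hθ hx (by linarith))
    calc S (x + 1) ^ 2 ≤ gtail a mid ^ 2 := by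
          have := (hSpos (x + 1) (by linarith)).le
          exact pow_le_pow_left₀ this h1 2
      _ ≤ S x * S (x + 2) := h2
  -- hazard in terms of S
  have hstep : ∀ x : ℝ, 0 ≤ x →
      (S (x + 1) - S (x + 2)) / S (x + 1) ≤ (S x - S (x + 1)) / S x := by
    intro x hx
    rw [div_le_div_iff₀ (hSpos (x + 1) (by linarith)) (hSpos x hx)]
    nlinarith [hkey x hx]
  -- hazard at nat points
  intro x y hxy
  have main : ∀ n : ℕ, (S ((x:ℝ) + n) - S ((x:ℝ) + n + 1)) / S ((x:ℝ) + n)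
      ≤ (S (x:ℝ) - S ((x:ℝ) + 1)) / S (x:ℝ) := by
    intro n
    induction n with
    | zero => simp
    | succ k ih =>
      refine le_trans ?_ ih
      have := hstep ((x:ℝ) + k) (by positivity)
      push_cast
      calc (S ((x:ℝ) + (k + 1)) - S ((x:ℝ) + (k + 1) + 1)) / S ((x:ℝ) + (k + 1))
          = (S (((x:ℝ) + k) + 1) - S (((x:ℝ) + k) + 2)) / S (((x:ℝ) + k) + 1) := by
            ring_nf
        _ ≤ (S ((x:ℝ) + k) - S (((x:ℝ) + k) + 1)) / S ((x:ℝ) + k) := this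
        _ = (S ((x:ℝ) + k) - S ((x:ℝ) + k + 1)) / S ((x:ℝ) + k) := by ring_nf
  have hy : (y:ℝ) = (x:ℝ) + ((y - x : ℕ) : ℝ) := by
    push_cast [Nat.cast_sub hxy]; ring
  have hx0 : (0:ℝ) ≤ (x:ℝ) := Nat.cast_nonneg x
  have hy0 : (0:ℝ) ≤ (y:ℝ) := Nat.cast_nonneg y
  rw [show c⁻¹ * Real.log (1 + ((y : ℝ) + 1) / θ) = Tf c θ ((y:ℝ) + 1) from rfl,
      show c⁻¹ * Real.log (1 + (y : ℝ) / θ) = Tf c θ (y:ℝ) from rfl,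
      show c⁻¹ * Real.log (1 + ((x : ℝ) + 1) / θ) = Tf c θ ((x:ℝ) + 1) from rfl,
      show c⁻¹ * Real.log (1 + (x : ℝ) / θ) = Tf c θ (x:ℝ) from rfl,
      hrw (y:ℝ) hy0, hrw (x:ℝ) hx0]
  have := main (y - x)
  rw [← hy] at this
  simpa using this
end

section
/- The density f(x) of the continuous gamma-Lomax distribution with parameters c, α, θ, with α > 1, has a unique critical point at x₀ = θ·(exp(c(α−1)/(c+1)) − 1): f is increasing on (0, x₀) and decreasing on (x₀, ∞), so x₀ is the unique mode. -/
open MeasureTheory Real Filter Set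

/-! With `t = log (1 + x / θ)`, i.e. `x + θ = θ e^t`, the density becomes a positive constant times
`t ^ (α - 1) * exp (-(1 + 1/c) t)`, whose derivative has the sign of `α - 1 - (1 + 1/c) t`; so it
increases up to `t₀ = (α - 1) / (1 + 1/c)` and decreases after it. The substitution is increasing
and sends `x₀` to `t₀`. -/

section RpowMulExpNeg

variable {p l : ℝ}

theorem hasDerivAt_rpow_mul_exp_neg {t : ℝ} (ht : 0 < t) :
    HasDerivAt (fun t => t ^ p * exp (-(l * t)))
      (t ^ (p - 1) * exp (-(l * t)) * (p - l * t)) t := by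
  have hpow := hasDerivAt_rpow_const (p := p) (Or.inl ht.ne')
  have hexp : HasDerivAt (fun t => exp (-(l * t))) (exp (-(l * t)) * -l) t := by
    simpa using ((hasDerivAt_id t).const_mul l).neg.exp
  refine (hpow.mul hexp).congr_deriv ?_
  rw [show t ^ p = t ^ (p - 1) * t by rw [← rpow_add_one ht.ne', sub_add_cancel]]
  ring

theorem continuous_rpow_mul_exp_neg (hp : 0 ≤ p) :
    Continuous (fun t : ℝ => t ^ p * exp (-(l * t))) := by
  have := continuous_rpow_const hp
  fun_prop

theorem strictMonoOn_rpow_mul_exp_neg (hp : 0 ≤ p) (hl : 0 < l) :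
    StrictMonoOn (fun t => t ^ p * exp (-(l * t))) (Icc 0 (p / l)) := by
  refine strictMonoOn_of_deriv_pos (convex_Icc _ _)
    (continuous_rpow_mul_exp_neg hp).continuousOn fun t ht => ?_
  rw [interior_Icc] at ht
  rw [(hasDerivAt_rpow_mul_exp_neg ht.1).deriv]
  have : l * t < p := (lt_div_iff₀' hl).mp ht.2
  exact mul_pos (mul_pos (rpow_pos_of_pos ht.1 _) (exp_pos _)) (by linarith)

theorem strictAntiOn_rpow_mul_exp_neg (hp : 0 ≤ p) (hl : 0 < l) :
    StrictAntiOn (fun t => t ^ p * exp (-(l * t))) (Ici (p / l)) := by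
  refine strictAntiOn_of_deriv_neg (convex_Ici _)
    (continuous_rpow_mul_exp_neg hp).continuousOn fun t ht => ?_
  rw [interior_Ici] at ht
  have ht0 : 0 < t := (div_nonneg hp hl.le).trans_lt ht
  rw [(hasDerivAt_rpow_mul_exp_neg ht0).deriv]
  have : p < l * t := (div_lt_iff₀' hl).mp ht
  exact mul_neg_of_pos_of_neg (by positivity) (by linarith)

end RpowMulExpNeg

theorem strictMonoOn_log_one_add_div {θ : ℝ} (hθ : 0 < θ) :
    StrictMonoOn (fun x => log (1 + x / θ)) (Ioi (-θ)) := by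
  refine strictMonoOn_log.comp (fun x _ y _ hxy => ?_) fun x hx => ?_
  · gcongr
  · rw [mem_Ioi, one_add_div hθ.ne']
    exact div_pos (neg_lt_iff_pos_add'.mp hx) hθ

theorem glPDF_eq_mul_log_rpow_mul_exp {c a θ x : ℝ} (hθ : 0 < θ) (hx : 0 < x + θ) :
    glPDF c a θ x = (θ * Gamma a * c ^ a)⁻¹ *
      (log (1 + x / θ) ^ (a - 1) * exp (-((1 + 1 / c) * log (1 + x / θ)))) := by
  have h1 : 0 < 1 + x / θ := by rw [one_add_div hθ.ne', add_comm]; positivity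
  generalize hL : log (1 + x / θ) = L
  have hexp : exp L = 1 + x / θ := hL ▸ exp_log h1
  have hxθ : x + θ = θ * exp L := by rw [hexp]; field_simp; ring
  rw [glPDF, hL, hxθ, ← hexp, ← exp_mul,
    show -((1 + 1 / c) * L) = L * -(1 / c) + -L by ring, exp_add, exp_neg L]
  field_simp

theorem gammaLomax_mode (c a θ : ℝ) (hc : 0 < c) (hθ : 0 < θ) (ha : 1 < a) :
    StrictMonoOn (glPDF c a θ) (Set.Ioc 0 (θ * (Real.exp (c * (a - 1) / (c + 1)) - 1))) ∧
    StrictAntiOn (glPDF c a θ) (Set.Ici (θ * (Real.exp (c * (a - 1) / (c + 1)) - 1))) := by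
  set φ : ℝ → ℝ := fun x => log (1 + x / θ)
  set t₀ := c * (a - 1) / (c + 1)
  set x₀ := θ * (exp t₀ - 1)
  have hφ : StrictMonoOn φ (Ici 0) :=
    (strictMonoOn_log_one_add_div hθ).mono (Ici_subset_Ioi.2 (neg_lt_zero.2 hθ))
  have hφ₀ : φ 0 = 0 := by simp [φ]
  have hφx₀ : φ x₀ = t₀ := by simp [φ, x₀, hθ.ne']
  have hx₀ : 0 ≤ x₀ := mul_nonneg hθ.le (sub_nonneg.2 (one_le_exp (by positivity)))
  have ht₀ : t₀ = (a - 1) / (1 + 1 / c) := by simp only [t₀]; field_simp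
  have hK : StrictMono fun y => (θ * Gamma a * c ^ a)⁻¹ * y :=
    strictMono_mul_left_of_pos (by have := zero_lt_one.trans ha; positivity)
  have hpdf : EqOn (fun x => (θ * Gamma a * c ^ a)⁻¹ *
      (φ x ^ (a - 1) * exp (-((1 + 1 / c) * φ x)))) (glPDF c a θ) (Ici 0) :=
    fun x hx => (glPDF_eq_mul_log_rpow_mul_exp hθ (add_pos_of_nonneg_of_pos hx hθ)).symm
  have hIoc : Ioc 0 x₀ ⊆ Ici 0 := Ioc_subset_Icc_self.trans Icc_subset_Ici_self
  have hIci : Ici x₀ ⊆ Ici 0 := Ici_subset_Ici.2 hx₀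
  constructor
  · refine (hK.comp_strictMonoOn ((strictMonoOn_rpow_mul_exp_neg (by linarith)
      (by positivity)).comp (hφ.mono hIoc) fun x hx => ?_)).congr (hpdf.mono hIoc)
    rw [← ht₀, ← hφx₀]
    exact ⟨hφ₀ ▸ hφ.monotoneOn self_mem_Ici (hIoc hx) hx.1.le, hφ.monotoneOn (hIoc hx) hx₀ hx.2⟩
  · refine (hK.comp_strictAntiOn ((strictAntiOn_rpow_mul_exp_neg (by linarith)
      (by positivity)).comp_strictMonoOn (hφ.mono hIci) fun x hx => ?_)).congr (hpdf.mono hIci)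
    rw [mem_Ici, ← ht₀, ← hφx₀]
    exact hφ.monotoneOn hx₀ (hIci hx) hx
end

section
/- Let X₁ ~ DGLD(c, α₁, θ) and X₂ ~ DGLD(c, α₂, θ) with α₁ > α₂ > 0. Then for every x ∈ ℕ, P(X₁ ≤ x) ≤ P(X₂ ≤ x); i.e., the normalized incomplete gamma function P(α, t) = γ(α, t)/Γ(α) is nonincreasing in α for each fixed t > 0, hence DGLD is stochastically increasing in α. -/
open MeasureTheory Real Filter Set

/-!
The Gamma(a₁) and Gamma(a₂) densities have ratio proportional to `u ^ (a₁ - a₂)`, which is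
increasing, so the first lies below the second up to a single crossing point and above it
afterwards. Since both have total mass one, the mass of `(0, t]` is then smaller for the first
density for every `t ≥ 0`: below the crossing compare the integrals over `(0, t]`, beyond it
compare the tails over `(t, ∞)`. The DGLD cdf at `x` is this regularized incomplete gamma ratio
at `t = c⁻¹ log (1 + (x + 1) / θ) ≥ 0`.
-/

theorem setIntegral_Ioc_le_of_single_crossing {f g : ℝ → ℝ} {a s t : ℝ}
    (hf : IntegrableOn f (Ioi a)) (hg : IntegrableOn g (Ioi a))
    (hfg : ∫ u in Ioi a, f u = ∫ u in Ioi a, g u)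
    (hle : ∀ u ∈ Ioc a s, f u ≤ g u) (hge : ∀ u ∈ Ici s, g u ≤ f u) (hat : a ≤ t) :
    ∫ u in Ioc a t, f u ≤ ∫ u in Ioc a t, g u := by
  rcases le_total t s with hts | hst
  · exact setIntegral_mono_on (hf.mono_set Ioc_subset_Ioi_self) (hg.mono_set Ioc_subset_Ioi_self)
      measurableSet_Ioc fun u hu => hle u ⟨hu.1, hu.2.trans hts⟩
  · have split (h : ℝ → ℝ) (hh : IntegrableOn h (Ioi a)) :
        ∫ u in Ioi a, h u = (∫ u in Ioc a t, h u) + ∫ u in Ioi t, h u := by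
      rw [← Ioc_union_Ioi_eq_Ioi hat]
      exact setIntegral_union (Ioc_disjoint_Ioi le_rfl) measurableSet_Ioi
        (hh.mono_set Ioc_subset_Ioi_self) (hh.mono_set (Ioi_subset_Ioi hat))
    have tail : ∫ u in Ioi t, g u ≤ ∫ u in Ioi t, f u :=
      setIntegral_mono_on (hg.mono_set (Ioi_subset_Ioi hat)) (hf.mono_set (Ioi_subset_Ioi hat))
        measurableSet_Ioi fun u hu => hge u (hst.trans hu.le)
    linarith [split f hf, split g hg]

theorem lowerGamma_eq_setIntegral {a t : ℝ} (ht : 0 ≤ t) :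
    lowerGamma a t = ∫ u in Ioc 0 t, exp (-u) * u ^ (a - 1) := by
  rw [lowerGamma, intervalIntegral.integral_of_le ht]
  exact setIntegral_congr_fun measurableSet_Ioc fun u _ => mul_comm _ _

theorem exp_neg_mul_rpow_sub_one_eq {u : ℝ} (hu : 0 < u) (a b : ℝ) :
    exp (-u) * u ^ (a - 1) = u ^ (a - b) * (exp (-u) * u ^ (b - 1)) := by
  rw [mul_left_comm, ← rpow_add hu]
  ring_nf

theorem exists_single_crossing_gamma_integrand {a₁ a₂ A B : ℝ} (ha : a₂ < a₁) (hA : 0 < A)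
    (hB : 0 < B) : ∃ s,
      (∀ u ∈ Ioc 0 s, B * (exp (-u) * u ^ (a₁ - 1)) ≤ A * (exp (-u) * u ^ (a₂ - 1))) ∧
      (∀ u ∈ Ici s, A * (exp (-u) * u ^ (a₂ - 1)) ≤ B * (exp (-u) * u ^ (a₁ - 1))) := by
  have hδ : 0 < a₁ - a₂ := sub_pos.2 ha
  set s := (A / B) ^ (a₁ - a₂)⁻¹
  have hs_pos : 0 < s := by positivity
  have hs_pow : s ^ (a₁ - a₂) = A / B := rpow_inv_rpow (by positivity) hδ.ne'
  have integrand_eq {u : ℝ} (hu : 0 < u) :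
      B * (exp (-u) * u ^ (a₁ - 1)) = (B * u ^ (a₁ - a₂)) * (exp (-u) * u ^ (a₂ - 1)) := by
    rw [exp_neg_mul_rpow_sub_one_eq hu a₁ a₂, mul_assoc]
  have integrand_nonneg {u : ℝ} (hu : 0 < u) : 0 ≤ exp (-u) * u ^ (a₂ - 1) :=
    (mul_pos (exp_pos _) (rpow_pos_of_pos hu _)).le
  refine ⟨s, fun u ⟨hu, hus⟩ => ?_, fun u (hsu : s ≤ u) => ?_⟩
  · have weight_le : B * u ^ (a₁ - a₂) ≤ A := by
      rw [← le_div_iff₀' hB, ← hs_pow]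
      exact rpow_le_rpow hu.le hus hδ.le
    rw [integrand_eq hu]
    exact mul_le_mul_of_nonneg_right weight_le (integrand_nonneg hu)
  · have hu : 0 < u := hs_pos.trans_le hsu
    have le_weight : A ≤ B * u ^ (a₁ - a₂) := by
      rw [← div_le_iff₀' hB, ← hs_pow]
      exact rpow_le_rpow hs_pos.le hsu hδ.le
    rw [integrand_eq hu]
    exact mul_le_mul_of_nonneg_right le_weight (integrand_nonneg hu)

theorem lowerGamma_div_Gamma_le_of_lt {a₁ a₂ t : ℝ} (ha : a₂ < a₁) (ha₂ : 0 < a₂) (ht : 0 ≤ t) :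
    lowerGamma a₁ t / Gamma a₁ ≤ lowerGamma a₂ t / Gamma a₂ := by
  have ha₁ : 0 < a₁ := ha₂.trans ha
  have hG₁ := Gamma_pos_of_pos ha₁
  have hG₂ := Gamma_pos_of_pos ha₂
  obtain ⟨s, below, above⟩ := exists_single_crossing_gamma_integrand ha hG₁ hG₂
  have crossing := setIntegral_Ioc_le_of_single_crossing
    ((GammaIntegral_convergent ha₁).const_mul (Gamma a₂))
    ((GammaIntegral_convergent ha₂).const_mul (Gamma a₁))
    (by rw [integral_const_mul, integral_const_mul, ← Gamma_eq_integral ha₁,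
      ← Gamma_eq_integral ha₂, mul_comm])
    below above ht
  rw [integral_const_mul, integral_const_mul, ← lowerGamma_eq_setIntegral ht,
    ← lowerGamma_eq_setIntegral ht] at crossing
  rw [div_le_div_iff₀ hG₁ hG₂]
  linarith

theorem dgld_st_order_alpha (c a₁ a₂ θ : ℝ) (hc : 0 < c) (ha : a₁ > a₂)
    (ha₂ : 0 < a₂) (hθ : 0 < θ) :
    ∀ x : ℕ, dgldCDF c a₁ θ x ≤ dgldCDF c a₂ θ x := fun x =>
  lowerGamma_div_Gamma_le_of_lt ha ha₂ <| mul_nonneg (inv_nonneg.2 hc.le) <|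
    log_nonneg <| le_add_of_nonneg_right <| div_nonneg (by positivity) hθ.le
end

section
/- If 0 < c < 1/r for a positive integer r, then the r-th moment of a random variable X with the continuous gamma-Lomax distribution with parameters c, α, θ is finite: ∫₀^∞ x^r f(x) dx < ∞. -/
open MeasureTheory Real Filter Set

theorem gammaLomax_moment_finite (c a θ : ℝ) (r : ℕ) (hr : 0 < r)
    (hc : 0 < c) (hcr : c < 1 / (r : ℝ)) (ha : 0 < a) (hθ : 0 < θ) :
    IntegrableOn (fun x : ℝ => x ^ r * glPDF c a θ x) (Set.Ioi 0) := by
  have hrpos : (0:ℝ) < r := Nat.cast_pos.mpr hr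
  have hcr' : c * r < 1 := by
    have := (lt_div_iff₀ hrpos).mp hcr; linarith
  set φ : ℝ → ℝ := fun u => θ * (Real.exp (c * u) - 1) with hφ
  set φ' : ℝ → ℝ := fun u => θ * (Real.exp (c * u) * c) with hφ'
  have himage : φ '' (Ioi 0) = Ioi 0 := by
    ext x
    constructor
    · rintro ⟨u, hu, rfl⟩
      have hu' : (0:ℝ) < u := hu
      have : (1:ℝ) < Real.exp (c * u) := by
        rw [show (1:ℝ) = Real.exp 0 by simp]
        exact Real.exp_lt_exp.mpr (by positivity)
      have : 0 < φ u := by simp only [hφ]; nlinarith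
      exact mem_Ioi.mpr this
    · intro hx
      have hx : 0 < x := hx
      refine ⟨c⁻¹ * Real.log (1 + x / θ), ?_, ?_⟩
      · have h1 : (0:ℝ) < Real.log (1 + x / θ) :=
          Real.log_pos (by nlinarith [div_pos hx hθ])
        exact mem_Ioi.mpr (by positivity)
      · have h2 : (0:ℝ) < 1 + x / θ := by positivity
        simp only [hφ]
        rw [← mul_assoc, mul_inv_cancel₀ hc.ne', one_mul, Real.exp_log h2]
        field_simp
        ring
  have hinj : Set.InjOn φ (Ioi 0) := by
    intro p _ q _ hpq
    simp only [hφ] at hpq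
    have h1 := mul_left_cancel₀ hθ.ne' hpq
    have h2 : Real.exp (c * p) = Real.exp (c * q) := by linarith
    exact mul_left_cancel₀ hc.ne' (Real.exp_eq_exp.mp h2)
  have hderiv : ∀ u ∈ Ioi (0:ℝ), HasDerivWithinAt φ (φ' u) (Ioi 0) u := by
    intro u _
    have h1 : HasDerivAt (fun u : ℝ => c * u) c u := by
      simpa using (hasDerivAt_id u).const_mul c
    exact (((h1.exp).sub_const 1).const_mul θ).hasDerivWithinAt
  rw [← himage, integrableOn_image_iff_integrableOn_abs_deriv_smul measurableSet_Ioi hderiv hinj]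
  set h : ℝ → ℝ := fun u => (θ * (Real.exp (c * u) - 1)) ^ r * u ^ (a - 1) *
      Real.exp (-u) / Real.Gamma a with hh
  have hGa : 0 < Real.Gamma a := Real.Gamma_pos_of_pos ha
  have hca : (0:ℝ) < c ^ a := Real.rpow_pos_of_pos hc a
  have heq : ∀ u ∈ Ioi (0:ℝ), h u = |φ' u| • ((φ u) ^ r * glPDF c a θ (φ u)) := by
    intro u hu
    have hu : 0 < u := hu
    have hexp : (1:ℝ) < Real.exp (c * u) := by
      rw [show (1:ℝ) = Real.exp 0 by simp]
      exact Real.exp_lt_exp.mpr (by positivity)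
    have h1 : 1 + φ u / θ = Real.exp (c * u) := by
      simp only [hφ]; field_simp; ring
    have h2 : φ u + θ = θ * Real.exp (c * u) := by simp only [hφ]; ring
    have h4 : (1 + φ u / θ) ^ (-(1 / c)) = Real.exp (-u) := by
      rw [h1, ← Real.exp_mul]
      congr 1
      field_simp
    have h5 : (Real.log (1 + φ u / θ)) ^ (a - 1) = c ^ (a - 1) * u ^ (a - 1) := by
      rw [h1, Real.log_exp, Real.mul_rpow hc.le hu.le]
    have hc1 : c * c ^ (a - 1) = c ^ a := by
      nth_rewrite 1 [← Real.rpow_one c]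
      rw [← Real.rpow_add hc]
      norm_num
    have habs : |φ' u| = θ * (Real.exp (c * u) * c) := by
      simp only [hφ']
      exact abs_of_pos (by positivity)
    rw [glPDF, h2, h4, h5, habs, smul_eq_mul]
    rw [← hc1]
    field_simp
    simp only [hh, hφ]
    field_simp
  refine IntegrableOn.congr_fun ?_ heq measurableSet_Ioi
  -- now prove IntegrableOn h (Ioi 0)
  set b : ℝ := 1 - c * r with hb
  have hbpos : 0 < b := by simp only [hb]; linarith
  have hbound_int : IntegrableOn
      (fun u : ℝ => (θ ^ r / Real.Gamma a) * (u ^ (a - 1) * Real.exp (-b * u))) (Ioi 0) := by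
    have := integrableOn_rpow_mul_exp_neg_mul_rpow (p := 1) (s := a - 1) (b := b)
      (by linarith) (by norm_num) hbpos
    have h2 : IntegrableOn (fun u : ℝ => u ^ (a - 1) * Real.exp (-b * u)) (Ioi 0) := by
      refine this.congr_fun (fun u hu => ?_) measurableSet_Ioi
      simp only [Real.rpow_one]
    exact h2.const_mul _
  refine Integrable.mono' hbound_int ?_ ?_
  · -- measurability of h
    have c1 : Continuous fun u : ℝ => (θ * (Real.exp (c * u) - 1)) ^ r := by continuity
    have c2 : ContinuousOn (fun u : ℝ => u ^ (a - 1)) (Ioi 0) :=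
      ContinuousOn.rpow_const continuousOn_id (fun x hx => Or.inl (ne_of_gt hx))
    have c3 : Continuous fun u : ℝ => Real.exp (-u) := by continuity
    exact (((c1.continuousOn.mul c2).mul c3.continuousOn).div_const
      _).aestronglyMeasurable measurableSet_Ioi
  · rw [ae_restrict_iff' measurableSet_Ioi]
    filter_upwards with u hu
    have hu : 0 < u := hu
    have hexp1 : (1:ℝ) ≤ Real.exp (c * u) := by
      rw [show (1:ℝ) = Real.exp 0 by simp]
      exact Real.exp_le_exp.mpr (by positivity)
    have hnn : 0 ≤ h u := by
      simp only [hh]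
      have : (0:ℝ) ≤ θ * (Real.exp (c * u) - 1) := by nlinarith
      positivity
    rw [Real.norm_eq_abs, abs_of_nonneg hnn]
    have key : (θ * (Real.exp (c * u) - 1)) ^ r ≤ θ ^ r * Real.exp ((r:ℝ) * (c * u)) := by
      calc (θ * (Real.exp (c * u) - 1)) ^ r ≤ (θ * Real.exp (c * u)) ^ r := by
            apply pow_le_pow_left₀ (by nlinarith) (by nlinarith)
        _ = θ ^ r * Real.exp (c * u) ^ r := mul_pow _ _ _
        _ = θ ^ r * Real.exp ((r:ℝ) * (c * u)) := by rw [← Real.exp_nat_mul]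
    have hexpeq : Real.exp ((r:ℝ) * (c * u)) * Real.exp (-u) = Real.exp (-b * u) := by
      rw [← Real.exp_add]; congr 1; simp only [hb]; ring
    calc h u = (θ * (Real.exp (c * u) - 1)) ^ r * (u ^ (a - 1) * Real.exp (-u)) / Real.Gamma a := by
          simp only [hh]; ring
      _ ≤ θ ^ r * Real.exp ((r:ℝ) * (c * u)) * (u ^ (a - 1) * Real.exp (-u)) / Real.Gamma a := by
          gcongr
      _ = (θ ^ r / Real.Gamma a) * (u ^ (a - 1) * (Real.exp ((r:ℝ) * (c * u)) * Real.exp (-u))) := by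
          ring
      _ = (θ ^ r / Real.Gamma a) * (u ^ (a - 1) * Real.exp (-b * u)) := by rw [hexpeq]
end

section
/- If 0 < c < 1/r for a positive integer r, then the r-th moment of X ~ DGLD(c, α, θ) is finite: ∑_{x=0}^∞ x^r · g(x) < ∞, where g is the DGLD pmf. -/
open MeasureTheory Real Filter Set

theorem dgld_moment_finite (c a θ : ℝ) (r : ℕ) (hr : 0 < r)
    (hc : 0 < c) (hcr : c < 1 / (r : ℝ)) (ha : 0 < a) (hθ : 0 < θ) :
    Summable (fun x : ℕ => (x : ℝ) ^ r * dgldPMF c a θ x) := by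
  have hrpos : (0:ℝ) < r := Nat.cast_pos.mpr hr
  set b : ℝ := 1 - r * c with hb_def
  have hb : 0 < b := by
    have : (r:ℝ) * c < (r:ℝ) * (1 / r) := by exact mul_lt_mul_of_pos_left hcr hrpos
    rw [mul_one_div, div_self hrpos.ne'] at this
    simp only [hb_def]; linarith
  set T : ℕ → ℝ := fun x => c⁻¹ * Real.log (1 + (x : ℝ) / θ) with hT_def
  have h1p : ∀ x : ℕ, (1:ℝ) ≤ 1 + (x : ℝ) / θ := fun x => by
    have : (0:ℝ) ≤ (x:ℝ)/θ := div_nonneg (Nat.cast_nonneg x) hθ.le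
    linarith
  have hTnn : ∀ x : ℕ, 0 ≤ T x := fun x =>
    mul_nonneg (inv_nonneg.mpr hc.le) (Real.log_nonneg (h1p x))
  have hTmono : ∀ x : ℕ, T x ≤ T (x + 1) := by
    intro x
    apply mul_le_mul_of_nonneg_left _ (inv_nonneg.mpr hc.le)
    apply Real.log_le_log (by linarith [h1p x])
    push_cast
    have hx1 : (x:ℝ) ≤ (x:ℝ) + 1 := by linarith
    gcongr
  have hT0 : T 0 = 0 := by simp [hT_def]
  -- f is the Gamma integrand, h is the comparison integrand
  set f : ℝ → ℝ := fun u => u ^ (a - 1) * Real.exp (-u) with hf_def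
  set h : ℝ → ℝ := fun u => u ^ (a - 1) * Real.exp (-(b * u)) with hh_def
  have hf_int : IntegrableOn f (Ioi 0) := by
    have := Real.GammaIntegral_convergent ha
    apply this.congr_fun _ measurableSet_Ioi
    intro u _; simp [hf_def, mul_comm]
  have hh_int : IntegrableOn h (Ioi 0) := by
    have h1 : IntegrableOn (fun u : ℝ => Real.exp (-(b*u)) * (b*u) ^ (a - 1)) (Ioi 0) := by
      have := (integrableOn_Ioi_comp_mul_left_iff
        (fun x : ℝ => Real.exp (-x) * x ^ (a - 1)) 0 hb).mpr
      simpa using this (by simpa using Real.GammaIntegral_convergent ha)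
    have h2 : IntegrableOn (fun u : ℝ => b ^ (1-a) * (Real.exp (-(b*u)) * (b*u) ^ (a - 1))) (Ioi 0) :=
      h1.const_mul (b ^ (1 - a))
    apply h2.congr_fun _ measurableSet_Ioi
    intro u hu
    rw [mem_Ioi] at hu
    simp only [hh_def]
    rw [Real.mul_rpow hb.le hu.le]
    rw [show b ^ (1-a) * (Real.exp (-(b*u)) * (b ^ (a-1) * u ^ (a-1)))
      = (b ^ (1-a) * b ^ (a-1)) * (u ^ (a-1) * Real.exp (-(b*u))) by ring]
    rw [← Real.rpow_add hb]
    norm_num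
  -- interval integrability
  have hfI : ∀ (s t : ℝ), 0 ≤ s → s ≤ t → IntervalIntegrable f volume s t := by
    intro s t hs hst
    rw [intervalIntegrable_iff_integrableOn_Ioc_of_le hst]
    exact hf_int.mono_set (fun u hu => lt_of_le_of_lt hs hu.1)
  have hhI : ∀ (s t : ℝ), 0 ≤ s → s ≤ t → IntervalIntegrable h volume s t := by
    intro s t hs hst
    rw [intervalIntegrable_iff_integrableOn_Ioc_of_le hst]
    exact hh_int.mono_set (fun u hu => lt_of_le_of_lt hs hu.1)
  have hΓ : 0 < Real.Gamma a := Real.Gamma_pos_of_pos ha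
  -- rewrite pmf difference as interval integral
  have hpmf : ∀ x : ℕ, dgldPMF c a θ x = (1 / Real.Gamma a) * ∫ u in T x..T (x+1), f u := by
    intro x
    have h1 : lowerGamma a (T (x+1)) - lowerGamma a (T x) = ∫ u in T x..T (x+1), f u := by
      unfold lowerGamma
      rw [intervalIntegral.integral_interval_sub_left
        (hfI 0 (T (x+1)) le_rfl (hTnn (x+1))) (hfI 0 (T x) le_rfl (hTnn x))]
    have hTx : T (x+1) = c⁻¹ * Real.log (1 + ((x:ℝ)+1)/θ) := by
      simp [hT_def]
    unfold dgldPMF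
    rw [← hTx, h1]
  -- key pointwise comparison on the interval
  have key : ∀ x : ℕ, (x:ℝ) ^ r * ∫ u in T x..T (x+1), f u ≤ θ ^ r * ∫ u in T x..T (x+1), h u := by
    intro x
    rw [← intervalIntegral.integral_const_mul, ← intervalIntegral.integral_const_mul]
    apply intervalIntegral.integral_mono_on (hTmono x)
      ((hfI _ _ (hTnn x) (hTmono x)).const_mul _)
      ((hhI _ _ (hTnn x) (hTmono x)).const_mul _)
    intro u hu
    have hu0 : 0 ≤ u := le_trans (hTnn x) hu.1
    have hxle : (x:ℝ) ≤ θ * Real.exp (c * u) := by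
      have h1 : Real.log (1 + (x:ℝ)/θ) ≤ c * u := by
        have := hu.1
        rw [hT_def] at this
        calc Real.log (1 + (x:ℝ)/θ) = c * (c⁻¹ * Real.log (1 + (x:ℝ)/θ)) := by
              field_simp
          _ ≤ c * u := mul_le_mul_of_nonneg_left this hc.le
      have h2 : 1 + (x:ℝ)/θ ≤ Real.exp (c * u) := by
        calc 1 + (x:ℝ)/θ = Real.exp (Real.log (1 + (x:ℝ)/θ)) :=
              (Real.exp_log (by linarith [h1p x])).symm
          _ ≤ Real.exp (c * u) := Real.exp_le_exp.mpr h1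
      have h3 : (x:ℝ)/θ ≤ Real.exp (c*u) := by linarith
      calc (x:ℝ) = θ * ((x:ℝ)/θ) := by field_simp
        _ ≤ θ * Real.exp (c*u) := mul_le_mul_of_nonneg_left h3 hθ.le
    have hxr : (x:ℝ)^r ≤ θ^r * Real.exp (r * (c * u)) := by
      calc (x:ℝ)^r ≤ (θ * Real.exp (c*u))^r :=
            pow_le_pow_left₀ (Nat.cast_nonneg x) hxle r
        _ = θ^r * Real.exp (c*u)^r := mul_pow _ _ _
        _ = θ^r * Real.exp (r * (c*u)) := by rw [← Real.exp_nat_mul]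
    simp only [hf_def, hh_def]
    calc (x:ℝ)^r * (u ^ (a-1) * Real.exp (-u))
        ≤ (θ^r * Real.exp (r * (c*u))) * (u ^ (a-1) * Real.exp (-u)) := by
          apply mul_le_mul_of_nonneg_right hxr
          exact mul_nonneg (Real.rpow_nonneg hu0 _) (Real.exp_pos _).le
      _ = θ^r * (u ^ (a-1) * (Real.exp (r * (c*u)) * Real.exp (-u))) := by ring
      _ = θ^r * (u ^ (a-1) * Real.exp (-(b*u))) := by
          rw [← Real.exp_add, hb_def]; ring_nf
  -- summability of the dominating series
  have hnn_h : ∀ x : ℕ, 0 ≤ θ^r * ∫ u in T x..T (x+1), h u := by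
    intro x
    apply mul_nonneg (pow_nonneg hθ.le r)
    apply intervalIntegral.integral_nonneg (hTmono x)
    intro u hu
    exact mul_nonneg (Real.rpow_nonneg (le_trans (hTnn x) hu.1) _) (Real.exp_pos _).le
  have hdom : Summable (fun x : ℕ => θ^r * ∫ u in T x..T (x+1), h u) := by
    apply summable_of_sum_range_le hnn_h (c := θ^r * ∫ u in Ioi (0:ℝ), h u)
    intro n
    rw [← Finset.mul_sum]
    apply mul_le_mul_of_nonneg_left _ (pow_nonneg hθ.le r)
    rw [intervalIntegral.sum_integral_adjacent_intervals
      (fun k _ => hhI _ _ (hTnn k) (hTmono k))]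
    rw [hT0, intervalIntegral.integral_of_le (hT0 ▸ hTnn n)]
    apply setIntegral_mono_set hh_int
    · filter_upwards [ae_restrict_mem measurableSet_Ioi] with u hu
      exact mul_nonneg (Real.rpow_nonneg (le_of_lt hu) _) (Real.exp_pos _).le
    · exact HasSubset.Subset.eventuallyLE (fun u hu => hu.1)
  -- conclude by comparison
  have hsum2 : Summable (fun x : ℕ => (1 / Real.Gamma a) * (θ^r * ∫ u in T x..T (x+1), h u)) :=
    hdom.mul_left _
  apply Summable.of_nonneg_of_le _ _ hsum2
  · intro x
    rw [hpmf x]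
    have : 0 ≤ ∫ u in T x..T (x+1), f u := by
      apply intervalIntegral.integral_nonneg (hTmono x)
      intro u hu
      exact mul_nonneg (Real.rpow_nonneg (le_trans (hTnn x) hu.1) _) (Real.exp_pos _).le
    positivity
  · intro x
    rw [hpmf x, show (x:ℝ)^r * ((1/Real.Gamma a) * ∫ u in T x..T (x+1), f u)
      = (1/Real.Gamma a) * ((x:ℝ)^r * ∫ u in T x..T (x+1), f u) by ring]
    exact mul_le_mul_of_nonneg_left (key x) (by positivity)
end
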